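/- Let Γ be a group generated by a symmetric set S, let T = S^M for some M ≥ 1, and let Γ̃ be the group presented by generators {t♯ : t ∈ T³} and relations a♯b♯ = c♯ whenever a,b,c ∈ T³ and ab = c in Γ. Then the subset S♯ = {s♯ : s ∈ S} generates Γ̃; in particular (S♯)^{3M} = (T³)♯ and Γ̃ is generated by the image of S. -/
import Mathlib


open Pointwise

/-- Multiplication-table relations on `T³ ⊆ Γ`. -/
def tripleRels {Γ : Type} [Group Γ] (T : Set Γ) : Set (FreeGroup ↥(T ^ 3)) :=
  {w | ∃ a b c : ↥(T ^ 3), (a : Γ) * (b : Γ) = (c : Γ) ∧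
    w = FreeGroup.of a * FreeGroup.of b * (FreeGroup.of c)⁻¹}

/-- The group `Γ̃` generated by `T³` with the multiplication-table relations. -/
abbrev MonGroup {Γ : Type} [Group Γ] (T : Set Γ) : Type := PresentedGroup (tripleRels T)

/-- The canonical embedding `t ↦ t♯` of `T³` into `Γ̃`. -/
def sharp {Γ : Type} [Group Γ] (T : Set Γ) (t : Γ) (h : t ∈ T ^ 3) : MonGroup T :=
  PresentedGroup.of ⟨t, h⟩

lemma sharp_mul {Γ : Type} [Group Γ] (T : Set Γ) {a b : Γ} (ha : a ∈ T ^ 3) (hb : b ∈ T ^ 3)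
    (hab : a * b ∈ T ^ 3) : sharp T a ha * sharp T b hb = sharp T (a * b) hab := by
  have hw : (FreeGroup.of (⟨a, ha⟩ : ↥(T ^ 3)) * FreeGroup.of ⟨b, hb⟩ *
      (FreeGroup.of ⟨a * b, hab⟩)⁻¹) ∈ tripleRels T :=
    ⟨⟨a, ha⟩, ⟨b, hb⟩, ⟨a * b, hab⟩, rfl, rfl⟩
  have h1 : PresentedGroup.mk (tripleRels T)
      (FreeGroup.of (⟨a, ha⟩ : ↥(T ^ 3)) * FreeGroup.of ⟨b, hb⟩ *
        (FreeGroup.of ⟨a * b, hab⟩)⁻¹) = 1 :=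
    (QuotientGroup.eq_one_iff _).2 (Subgroup.subset_normalClosure hw)
  rw [map_mul, map_mul, map_inv, mul_inv_eq_one] at h1
  exact h1

/-- If `S` is a symmetric generating set of `Γ` and `T = S^M`, then
`S♯` generates `Γ̃`, and `(S♯)^{3M} = (T³)♯`. -/
theorem stmt10 {Γ : Type} [Group Γ] (S : Set Γ)
    (h1 : (1 : Γ) ∈ S) (hsymmS : ∀ s ∈ S, s⁻¹ ∈ S)
    (hgen : Subgroup.closure S = ⊤)
    (M : ℕ) (hM : 1 ≤ M) (T : Set Γ) (hT : T = S ^ M) :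
    Subgroup.closure
        {x : MonGroup T | ∃ (s : Γ) (_ : s ∈ S) (h3 : s ∈ T ^ 3), x = sharp T s h3} = ⊤ ∧
    {x : MonGroup T | ∃ (s : Γ) (_ : s ∈ S) (h3 : s ∈ T ^ 3), x = sharp T s h3} ^ (3 * M) =
      {x : MonGroup T | ∃ (t : Γ) (h3 : t ∈ T ^ 3), x = sharp T t h3} := by
  set A : Set (MonGroup T) :=
    {x : MonGroup T | ∃ (s : Γ) (_ : s ∈ S) (h3 : s ∈ T ^ 3), x = sharp T s h3} with hA
  -- 1 belongs to every power of S
  have hone : ∀ k : ℕ, (1 : Γ) ∈ S ^ k := by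
    intro k
    induction k with
    | zero => simp
    | succ n ih =>
      rw [pow_succ]
      have := Set.mul_mem_mul ih h1
      simpa using this
  -- monotonicity of powers of S
  have hmono : ∀ {n m : ℕ}, n ≤ m → S ^ n ⊆ S ^ m := by
    intro n m hnm
    obtain ⟨k, rfl⟩ := Nat.exists_eq_add_of_le hnm
    rw [pow_add]
    intro x hx
    simpa using Set.mul_mem_mul hx (hone k)
  have hT3 : T ^ 3 = S ^ (3 * M) := by
    rw [hT, ← pow_mul, mul_comm]
  have h3of : ∀ {n : ℕ}, n ≤ 3 * M → ∀ {t : Γ}, t ∈ S ^ n → t ∈ T ^ 3 := by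
    intro n hn t ht
    rw [hT3]
    exact hmono hn ht
  have h3M1 : 1 ≤ 3 * M := le_trans hM (Nat.le_mul_of_pos_left M (by norm_num))
  -- key inductive claim
  have claim : ∀ n : ℕ, 1 ≤ n → n ≤ 3 * M →
      A ^ n = {x : MonGroup T | ∃ (t : Γ) (_ : t ∈ S ^ n) (h3 : t ∈ T ^ 3), x = sharp T t h3} := by
    intro n
    induction n with
    | zero => intro h; exact absurd h (by norm_num)
    | succ n ih =>
      intro _ hle
      rcases Nat.eq_or_lt_of_le (Nat.one_le_iff_ne_zero.mpr (Nat.succ_ne_zero n)) with h | h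
      · -- n + 1 = 1
        have hn0 : n = 0 := by omega
        subst hn0
        rw [zero_add, pow_one, pow_one]
      · have hn1 : 1 ≤ n := by omega
        have hnle : n ≤ 3 * M := by omega
        rw [pow_succ, ih hn1 hnle]
        ext x
        constructor
        · rintro ⟨y, ⟨p, hp, hp3, rfl⟩, z, ⟨s, hs, hs3, rfl⟩, rfl⟩
          have hps : p * s ∈ S ^ (n + 1) := by
            rw [pow_succ]
            exact Set.mul_mem_mul hp hs
          exact ⟨p * s, hps, h3of hle hps, sharp_mul T hp3 hs3 (h3of hle hps)⟩
        · rintro ⟨t, ht, h3, rfl⟩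
          rw [pow_succ] at ht
          rcases ht with ⟨p, hp, s, hs, rfl⟩
          have hp3 : p ∈ T ^ 3 := h3of hnle hp
          have hs3 : s ∈ T ^ 3 := h3of h3M1 (by simpa [pow_one] using hs)
          exact ⟨sharp T p hp3, ⟨p, hp, hp3, rfl⟩, sharp T s hs3, ⟨s, hs, hs3, rfl⟩,
            sharp_mul T hp3 hs3 h3⟩
  -- second part
  have key : A ^ (3 * M) = {x : MonGroup T | ∃ (t : Γ) (h3 : t ∈ T ^ 3), x = sharp T t h3} := by
    rw [claim (3 * M) h3M1 le_rfl]
    ext x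
    constructor
    · rintro ⟨t, _, h3, rfl⟩
      exact ⟨t, h3, rfl⟩
    · rintro ⟨t, h3, rfl⟩
      exact ⟨t, hT3 ▸ h3, h3, rfl⟩
  refine ⟨?_, key⟩
  -- powers of A lie in the closure of A
  have hpowcl : ∀ k : ℕ, A ^ k ⊆ (Subgroup.closure A : Set (MonGroup T)) := by
    intro k
    induction k with
    | zero =>
      rw [pow_zero]
      rintro x hx
      rw [Set.mem_one] at hx
      subst hx
      exact Subgroup.one_mem _
    | succ n ih =>
      rw [pow_succ]
      rintro x ⟨y, hy, z, hz, rfl⟩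
      exact Subgroup.mul_mem _ (ih hy) (Subgroup.subset_closure hz)
  rw [eq_top_iff, ← PresentedGroup.closure_range_of (tripleRels T)]
  apply (Subgroup.closure_le _).2
  rintro x ⟨⟨t, h3⟩, rfl⟩
  have hx : (PresentedGroup.of ⟨t, h3⟩ : MonGroup T) ∈ A ^ (3 * M) := by
    rw [key]
    exact ⟨t, h3, rfl⟩
  exact hpowcl (3 * M) hx
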